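/- arXiv:2212.14405 — 5 statements merged into one kernel-verified Lean document; each statement's English description precedes it below -/
import Mathlib

section
/- Let (Ω, μ) be a probability space, let γ ∈ ℝ with 0 < γ < 1, let R ≥ 0, and let r : ℕ → Ω → ℝ be a sequence of measurable functions with |r t ω| ≤ R for all t ∈ ℕ and all ω ∈ Ω. Define the discounted return D(ω) = ∑'_t γ^t · r t ω, the normalized return J = (1 − γ) · ∫ D dμ, the episodic variance V_P = ∫ (D(ω) − J/(1 − γ))² dμ(ω), and the per-step (occupancy-weighted) variance V_D = (1 − γ) · ∫ (∑'_t γ^t · (r t ω − J)²) dμ(ω). Then V_P ≤ V_D / (1 − γ)². (Lemma 1: the variance of discounted episodic returns is upper bounded by the per-step variance of rewards under the normalized discounted occupancy weighting, divided by (1 − γ)².) -/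
open MeasureTheory

lemma summable_geo_mul (γ : ℝ) (hγ0 : 0 < γ) (hγ1 : γ < 1) (x : ℕ → ℝ) (C : ℝ)
    (hx : ∀ t, |x t| ≤ C) : Summable (fun t => γ ^ t * x t) := by
  apply Summable.of_norm
  refine Summable.of_nonneg_of_le (fun t => norm_nonneg _) (fun t => ?_)
    ((summable_geometric_of_lt_one hγ0.le hγ1).mul_left C)
  rw [norm_mul, norm_pow, Real.norm_eq_abs, Real.norm_eq_abs, abs_of_pos hγ0, mul_comm]
  exact mul_le_mul_of_nonneg_right (hx t) (pow_nonneg hγ0.le t)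

lemma geo_sq_ineq (γ : ℝ) (hγ0 : 0 < γ) (hγ1 : γ < 1) (x : ℕ → ℝ) (C : ℝ)
    (hx : ∀ t, |x t| ≤ C) :
    (∑' t, γ ^ t * x t) ^ 2 ≤ (∑' t, γ ^ t * (x t) ^ 2) / (1 - γ) := by
  have h1γ : (0:ℝ) < 1 - γ := by linarith
  have hs : Summable (fun t => γ ^ t * x t) := summable_geo_mul γ hγ0 hγ1 x C hx
  have hs2 : Summable (fun t => γ ^ t * (x t) ^ 2) := by
    refine summable_geo_mul γ hγ0 hγ1 _ (C ^ 2) (fun t => ?_)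
    rw [abs_pow]
    exact pow_le_pow_left₀ (abs_nonneg _) (hx t) 2
  set S := ∑' t, γ ^ t * x t with hS
  set c := (1 - γ) * S with hc
  have hgeo : Summable (fun t : ℕ => γ ^ t) := summable_geometric_of_lt_one hγ0.le hγ1
  have htg : (∑' t : ℕ, γ ^ t) = (1 - γ)⁻¹ := tsum_geometric_of_lt_one hγ0.le hγ1
  have key : (0:ℝ) ≤ ∑' t, γ ^ t * (x t - c) ^ 2 :=
    tsum_nonneg (fun t => mul_nonneg (pow_nonneg hγ0.le t) (sq_nonneg _))
  have expand : (∑' t, γ ^ t * (x t - c) ^ 2)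
      = (∑' t, γ ^ t * (x t) ^ 2) - 2 * c * S + c ^ 2 * (1 - γ)⁻¹ := by
    have h : ∀ t, γ ^ t * (x t - c) ^ 2
        = γ ^ t * (x t) ^ 2 - 2 * c * (γ ^ t * x t) + c ^ 2 * γ ^ t := by
      intro t; ring
    rw [tsum_congr h, Summable.tsum_add (hs2.sub (hs.mul_left _)) (hgeo.mul_left _),
      Summable.tsum_sub hs2 (hs.mul_left _), tsum_mul_left, tsum_mul_left, htg]
  have : (0:ℝ) ≤ (∑' t, γ ^ t * (x t) ^ 2) - (1 - γ) * S ^ 2 := by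
    have := key
    rw [expand] at this
    have hc2 : 2 * c * S = 2 * (1 - γ) * S ^ 2 := by rw [hc]; ring
    have hc3 : c ^ 2 * (1 - γ)⁻¹ = (1 - γ) * S ^ 2 := by
      rw [hc]; field_simp
    linarith [this, hc2 ▸ hc3 ▸ this]
  rw [le_div_iff₀ h1γ]
  nlinarith [this]

lemma measurable_geo_tsum {Ω : Type*} [MeasurableSpace Ω] (γ : ℝ) (hγ0 : 0 < γ) (hγ1 : γ < 1)
    (r : ℕ → Ω → ℝ) (hmeas : ∀ t, Measurable (r t)) (R : ℝ) (hbdd : ∀ t ω, |r t ω| ≤ R) :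
    Measurable (fun ω => ∑' t, γ ^ t * r t ω) := by
  apply measurable_of_tendsto_metrizable
    (f := fun n ω => ∑ t ∈ Finset.range n, γ ^ t * r t ω)
  · intro n; exact Finset.measurable_sum _ (fun t _ => (hmeas t).const_mul _)
  · rw [tendsto_pi_nhds]; intro ω
    exact (summable_geo_mul γ hγ0 hγ1 (fun t => r t ω) R
      (fun t => hbdd t ω)).hasSum.tendsto_sum_nat

/-- Lemma 1: the variance of discounted episodic returns is upper bounded by the
per-step variance of rewards under the normalized discounted occupancy weighting,
divided by `(1 − γ)²`. -/
theorem episodic_variance_le_per_step_variance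
    {Ω : Type*} [MeasurableSpace Ω] (μ : Measure Ω) [IsProbabilityMeasure μ]
    (γ : ℝ) (hγ0 : 0 < γ) (hγ1 : γ < 1)
    (R : ℝ) (hR : 0 ≤ R)
    (r : ℕ → Ω → ℝ) (hmeas : ∀ t, Measurable (r t))
    (hbdd : ∀ t ω, |r t ω| ≤ R) :
    (∫ ω, ((∑' t, γ ^ t * r t ω) -
        ((1 - γ) * ∫ ω', (∑' t, γ ^ t * r t ω') ∂μ) / (1 - γ)) ^ 2 ∂μ) ≤
      ((1 - γ) * ∫ ω, (∑' t, γ ^ t *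
          (r t ω - (1 - γ) * ∫ ω', (∑' s, γ ^ s * r s ω') ∂μ) ^ 2) ∂μ) /
        (1 - γ) ^ 2 := by
  have h1γ : (0:ℝ) < 1 - γ := by linarith
  set J : ℝ := (1 - γ) * ∫ ω', (∑' t, γ ^ t * r t ω') ∂μ with hJ
  have hxb : ∀ ω t, |r t ω - J| ≤ R + |J| := by
    intro ω t
    calc |r t ω - J| ≤ |r t ω| + |J| := abs_sub _ _
      _ ≤ R + |J| := by linarith [hbdd t ω]
  -- pointwise rewriting
  have hpt : ∀ ω, (∑' t, γ ^ t * (r t ω - J)) = (∑' t, γ ^ t * r t ω) - J / (1 - γ) := by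
    intro ω
    have h1 : Summable (fun t => γ ^ t * r t ω) :=
      summable_geo_mul γ hγ0 hγ1 _ R (fun t => hbdd t ω)
    have h2 : Summable (fun t : ℕ => γ ^ t * J) :=
      (summable_geometric_of_lt_one hγ0.le hγ1).mul_right J
    calc (∑' t, γ ^ t * (r t ω - J)) = ∑' t, (γ ^ t * r t ω - γ ^ t * J) :=
          tsum_congr (fun t => by ring)
      _ = (∑' t, γ ^ t * r t ω) - ∑' t : ℕ, γ ^ t * J := Summable.tsum_sub h1 h2
      _ = (∑' t, γ ^ t * r t ω) - J / (1 - γ) := by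
          rw [tsum_mul_right, tsum_geometric_of_lt_one hγ0.le hγ1]
          ring
  -- pointwise inequality
  have hineq : ∀ ω, ((∑' t, γ ^ t * r t ω) - J / (1 - γ)) ^ 2
      ≤ (∑' t, γ ^ t * (r t ω - J) ^ 2) / (1 - γ) := by
    intro ω
    rw [← hpt ω]
    exact geo_sq_ineq γ hγ0 hγ1 (fun t => r t ω - J) (R + |J|) (hxb ω)
  -- integrability of the RHS integrand
  have hGmeas : Measurable (fun ω => ∑' t, γ ^ t * (r t ω - J) ^ 2) := by
    apply measurable_geo_tsum γ hγ0 hγ1 _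
      (fun t => ((hmeas t).sub_const J).pow_const 2) ((R + |J|) ^ 2)
    intro t ω
    rw [abs_pow]
    exact pow_le_pow_left₀ (abs_nonneg _) (hxb ω t) 2
  have hGbdd : ∀ ω, ‖∑' t, γ ^ t * (r t ω - J) ^ 2‖ ≤ (R + |J|) ^ 2 * (1 - γ)⁻¹ := by
    intro ω
    have hsum : Summable (fun t => γ ^ t * (r t ω - J) ^ 2) := by
      refine summable_geo_mul γ hγ0 hγ1 _ ((R + |J|) ^ 2) (fun t => ?_)
      rw [abs_pow]; exact pow_le_pow_left₀ (abs_nonneg _) (hxb ω t) 2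
    rw [Real.norm_eq_abs, abs_of_nonneg
      (tsum_nonneg (fun t => mul_nonneg (pow_nonneg hγ0.le t) (sq_nonneg _)))]
    calc (∑' t, γ ^ t * (r t ω - J) ^ 2) ≤ ∑' t : ℕ, γ ^ t * (R + |J|) ^ 2 := by
          refine Summable.tsum_le_tsum (fun t => ?_) hsum
            ((summable_geometric_of_lt_one hγ0.le hγ1).mul_right _)
          refine mul_le_mul_of_nonneg_left ?_ (pow_nonneg hγ0.le t)
          rw [← sq_abs]
          exact pow_le_pow_left₀ (abs_nonneg _) (hxb ω t) 2
      _ = (R + |J|) ^ 2 * (1 - γ)⁻¹ := by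
          rw [tsum_mul_right, tsum_geometric_of_lt_one hγ0.le hγ1]; ring
  have hGint : Integrable (fun ω => ∑' t, γ ^ t * (r t ω - J) ^ 2) μ :=
    ⟨hGmeas.aestronglyMeasurable, HasFiniteIntegral.of_bounded (ae_of_all μ hGbdd)⟩
  -- integrate
  have hmain : (∫ ω, ((∑' t, γ ^ t * r t ω) - J / (1 - γ)) ^ 2 ∂μ)
      ≤ ∫ ω, (∑' t, γ ^ t * (r t ω - J) ^ 2) / (1 - γ) ∂μ := by
    refine integral_mono_of_nonneg (ae_of_all μ (fun ω => sq_nonneg _))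
      (hGint.div_const _) (ae_of_all μ hineq)
  rw [integral_div] at hmain
  have heq : ((1 - γ) * ∫ ω, (∑' t, γ ^ t * (r t ω - J) ^ 2) ∂μ) / (1 - γ) ^ 2
      = (∫ ω, (∑' t, γ ^ t * (r t ω - J) ^ 2) ∂μ) / (1 - γ) := by
    field_simp
  rw [heq]
  exact hmain
end

section
/- Let p and q be probability measures on a measurable space α with p absolutely continuous with respect to q, let ω : α → ℝ be the real-valued Radon–Nikodym derivative of p with respect to q, and let r : α → ℝ be measurable with |r(x)| ≤ R for q-almost every x, where R ≥ 0. Assume ω·r and ω are square-integrable with respect to q. Let N ≥ 1 be a natural number, let q^N be the product measure on Fin N → α of N copies of q, and define the empirical estimator Ŵ(x) = (1/N) · ∑_{i∈Fin N} ω(x i) · r(x i). Then Var_{q^N}(Ŵ) ≤ (R²/N) · ∫ ω² dq. (Lemma 3: the variance of the N-sample marginalized importance weighted estimator is upper bounded by ‖r‖∞²/N times the exponentiated Rényi-2 divergence between p and q.) -/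
open MeasureTheory ProbabilityTheory

/-! Under the product measure the coordinates of `x : Fin N → α` are i.i.d. with law `q`, so the
variance of the empirical mean of `ω r` is `Var_q(ω r) / N`. Since `|r| ≤ R`, the variance of
`ω r` is at most its second moment, hence at most `R² ∫ ω² dq`. -/

lemma variance_empirical_mean_pi {ι Ω : Type*} [Fintype ι] [MeasurableSpace Ω]
    {μ : Measure Ω} [IsProbabilityMeasure μ] {X : Ω → ℝ} (hX : MemLp X 2 μ) :
    Var[fun x => 1 / (Fintype.card ι : ℝ) * ∑ i, X (x i); Measure.pi fun _ : ι => μ] =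
      Var[X; μ] / Fintype.card ι := by
  have hsum : (fun x : ι → Ω => ∑ i, X (x i)) = ∑ i, fun x => X (x i) := by
    funext x
    simp only [Finset.sum_apply]
  rw [variance_const_mul, hsum, variance_sum_pi fun _ => hX, Finset.sum_const, Finset.card_univ,
    nsmul_eq_mul]
  rcases eq_or_ne (Fintype.card ι : ℝ) 0 with h | h
  · simp [h]
  · field_simp

lemma variance_mul_le_of_abs_le {Ω : Type*} [MeasurableSpace Ω] {μ : Measure Ω}
    [IsProbabilityMeasure μ] {g r : Ω → ℝ} {R : ℝ} (hg : MemLp g 2 μ)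
    (hr : AEStronglyMeasurable r μ) (hbdd : ∀ᵐ x ∂μ, |r x| ≤ R) :
    Var[fun x => g x * r x; μ] ≤ R ^ 2 * ∫ x, g x ^ 2 ∂μ := by
  have hpointwise : ∀ᵐ x ∂μ, (g x * r x) ^ 2 ≤ R ^ 2 * g x ^ 2 := by
    filter_upwards [hbdd] with x hx
    rw [mul_pow, mul_comm (R ^ 2), ← sq_abs (r x)]
    exact mul_le_mul_of_nonneg_left (pow_le_pow_left₀ (abs_nonneg _) hx 2) (sq_nonneg _)
  calc Var[fun x => g x * r x; μ] ≤ ∫ x, (g x * r x) ^ 2 ∂μ :=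
        variance_le_expectation_sq (hg.aestronglyMeasurable.mul hr)
    _ ≤ ∫ x, R ^ 2 * g x ^ 2 ∂μ :=
        integral_mono_of_nonneg (.of_forall fun _ => sq_nonneg _)
          (hg.integrable_sq.const_mul _) hpointwise
    _ = R ^ 2 * ∫ x, g x ^ 2 ∂μ := integral_const_mul _ _

theorem variance_empirical_estimator_le_general
    {α : Type*} [MeasurableSpace α]
    (p q : Measure α) [IsProbabilityMeasure q]
    (r : α → ℝ) (hr : Measurable r)
    (R : ℝ) (hbdd : ∀ᵐ x ∂q, |r x| ≤ R)
    (hw : Integrable (fun x => ((p.rnDeriv q x).toReal) ^ 2) q)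
    (N : ℕ) :
    (∫ x : Fin N → α,
        ((1 / (N : ℝ)) * ∑ i : Fin N, (p.rnDeriv q (x i)).toReal * r (x i) -
          ∫ y : Fin N → α,
            (1 / (N : ℝ)) * ∑ i : Fin N, (p.rnDeriv q (y i)).toReal * r (y i)
              ∂(Measure.pi fun _ : Fin N => q)) ^ 2
        ∂(Measure.pi fun _ : Fin N => q)) ≤
      R ^ 2 / N * ∫ x, ((p.rnDeriv q x).toReal) ^ 2 ∂q := by
  have hω_meas : Measurable fun x => (p.rnDeriv q x).toReal :=
    (Measure.measurable_rnDeriv p q).ennreal_toReal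
  have hω : MemLp (fun x => (p.rnDeriv q x).toReal) 2 q :=
    (memLp_two_iff_integrable_sq hω_meas.aestronglyMeasurable).2 hw
  have hr_top : MemLp r ⊤ q := memLp_top_of_bound hr.aestronglyMeasurable R
    (hbdd.mono fun x hx => by rwa [Real.norm_eq_abs])
  have hvar := variance_empirical_mean_pi (ι := Fin N) (hr_top.mul' hω)
  rw [Fintype.card_fin] at hvar
  rw [← variance_eq_integral (by fun_prop), hvar, div_mul_eq_mul_div]
  exact div_le_div_of_nonneg_right
    (variance_mul_le_of_abs_le hω hr.aestronglyMeasurable hbdd) N.cast_nonneg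

/-- Lemma 3: the variance of the `N`-sample marginalized importance weighted
estimator is upper bounded by `R²/N` times the exponentiated Rényi-2 divergence
between `p` and `q`. -/
theorem variance_empirical_estimator_le
    {α : Type*} [MeasurableSpace α]
    (p q : Measure α) [IsProbabilityMeasure p] [IsProbabilityMeasure q]
    (hpq : p ≪ q)
    (r : α → ℝ) (hr : Measurable r)
    (R : ℝ) (hR : 0 ≤ R) (hbdd : ∀ᵐ x ∂q, |r x| ≤ R)
    (hwr : Integrable (fun x => ((p.rnDeriv q x).toReal * r x) ^ 2) q)
    (hw : Integrable (fun x => ((p.rnDeriv q x).toReal) ^ 2) q)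
    (N : ℕ) (hN : 1 ≤ N) :
    (∫ x : Fin N → α,
        ((1 / (N : ℝ)) * ∑ i : Fin N, (p.rnDeriv q (x i)).toReal * r (x i) -
          ∫ y : Fin N → α,
            (1 / (N : ℝ)) * ∑ i : Fin N, (p.rnDeriv q (y i)).toReal * r (y i)
              ∂(Measure.pi fun _ : Fin N => q)) ^ 2
        ∂(Measure.pi fun _ : Fin N => q)) ≤
      R ^ 2 / N * ∫ x, ((p.rnDeriv q x).toReal) ^ 2 ∂q :=
  variance_empirical_estimator_le_general p q r hr R hbdd hw N
end

section
/- Let p and q be probability measures on a measurable space α with p absolutely continuous with respect to q, let ω : α → ℝ be the real-valued Radon–Nikodym derivative of p with respect to q, and let r : α → ℝ be measurable with |r(x)| ≤ R for q-almost every x, where R ≥ 0. Assume ω·r is square-integrable with respect to q. Let J = ∫ r dp, let N ≥ 1, let q^N be the product measure on Fin N → α of N copies of q, and define Ŵ(x) = (1/N) · ∑_{i∈Fin N} ω(x i) · r(x i). Then for every δ with 0 < δ ≤ 1, q^N { x : J ≥ Ŵ(x) − sqrt( ((1 − δ)/δ) · Var_q(ω · r) / N ) } ≥ 1 − δ. (Theorem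 2: with probability at least 1 − δ, the true expected reward under p lower-bounds the empirical marginalized-importance-sampling estimate minus a variance penalty; hence the variance-regularized objective is a lower bound to the true objective.) -/
/-!
By the change of measure `∫ r dp = ∫ ω r dq`, the estimate `Ŵ` is the mean of `N` independent
copies of `ω r` under `q^N`, so it has mean `J` and variance `Var_q(ω r) / N`. Cantelli's one-sided
inequality `P(Z - E Z > c) ≤ v / (v + c²)` for a variable of variance `v` then gives the claim:
the penalty `c` is chosen so that `c² = (1 - δ) / δ · v`, which makes the bound exactly `δ`.
-/

open MeasureTheory ProbabilityTheory

lemma div_add_sqrt_sq_le {v δ : ℝ} (hv : 0 ≤ v) (hδ0 : 0 < δ) (hδ1 : δ ≤ 1) :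
    v / (v + √((1 - δ) / δ * v) ^ 2) ≤ δ := by
  rw [Real.sq_sqrt (by have := sub_nonneg.2 hδ1; positivity)]
  calc v / (v + (1 - δ) / δ * v) = δ * (v / v) := by
        rw [show v + (1 - δ) / δ * v = v / δ by field_simp; ring, div_div_eq_mul_div,
          mul_div_assoc']
        ring
    _ ≤ δ := mul_le_of_le_one_right hδ0.le (div_self_le_one v)

section Cantelli

variable {Ω : Type*} [MeasurableSpace Ω] {μ : Measure Ω} [IsProbabilityMeasure μ] {Z : Ω → ℝ}

lemma integral_sub_integral_add_sq (hZ : MemLp Z 2 μ) (u : ℝ) :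
    ∫ ω, (Z ω - μ[Z] + u) ^ 2 ∂μ = Var[Z; μ] + u ^ 2 := by
  have hZ1 : Integrable Z μ := hZ.integrable one_le_two
  have hsq : Integrable (fun ω => (Z ω - μ[Z]) ^ 2) μ := (hZ.sub (memLp_const μ[Z])).integrable_sq
  have hlin : Integrable (fun ω => 2 * u * (Z ω - μ[Z]) + u ^ 2) μ := by fun_prop
  calc ∫ ω, (Z ω - μ[Z] + u) ^ 2 ∂μ
      = ∫ ω, ((Z ω - μ[Z]) ^ 2 + (2 * u * (Z ω - μ[Z]) + u ^ 2)) ∂μ := by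
        congr with ω; ring
    _ = Var[Z; μ] + u ^ 2 := by
        rw [integral_add hsq hlin, integral_add (by fun_prop) (integrable_const _),
          integral_const_mul, integral_sub hZ1 (integrable_const _),
          ← variance_eq_integral hZ.aemeasurable]
        simp

lemma meas_integral_add_lt_le_variance_div_of_pos (hZ : MemLp Z 2 μ) {c : ℝ} (hc : 0 < c) :
    μ {ω | μ[Z] + c < Z ω} ≤ ENNReal.ofReal (Var[Z; μ] / (Var[Z; μ] + c ^ 2)) := by
  set v := Var[Z; μ]
  have hv : 0 ≤ v := variance_nonneg Z μ
  -- Markov's inequality for `(Z - μ[Z] + u)²`, with the optimal shift `u = v / c`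
  set u := v / c
  have hmarkov := mul_meas_ge_le_integral_of_nonneg
    (.of_forall fun ω => sq_nonneg (Z ω - μ[Z] + u))
    ((hZ.sub (memLp_const _)).add (memLp_const u)).integrable_sq ((c + u) ^ 2)
  rw [integral_sub_integral_add_sq hZ, mul_comm, ← le_div_iff₀ (by positivity)] at hmarkov
  calc μ {ω | μ[Z] + c < Z ω}
      ≤ μ {ω | (c + u) ^ 2 ≤ (Z ω - μ[Z] + u) ^ 2} :=
        measure_mono fun ω (hω : μ[Z] + c < Z ω) =>
          pow_le_pow_left₀ (by positivity) (by linarith) 2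
    _ ≤ ENNReal.ofReal ((v + u ^ 2) / (c + u) ^ 2) := by
        rw [← ofReal_measureReal]
        exact ENNReal.ofReal_le_ofReal hmarkov
    _ = ENNReal.ofReal (v / (v + c ^ 2)) := by
        have : v + c ^ 2 ≠ 0 := by positivity
        have : c ≠ 0 := hc.ne'
        congr 1
        simp only [u]
        field_simp
        ring

/-- Cantelli's inequality. It still holds at `c = 0`: the right side is `1`, or `0 / 0 = 0` when
`Z` is a.e. constant. -/
lemma meas_integral_add_lt_le_variance_div (hZ : MemLp Z 2 μ) {c : ℝ} (hc : 0 ≤ c) :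
    μ {ω | μ[Z] + c < Z ω} ≤ ENNReal.ofReal (Var[Z; μ] / (Var[Z; μ] + c ^ 2)) := by
  rcases hc.lt_or_eq with hc | rfl
  · exact meas_integral_add_lt_le_variance_div_of_pos hZ hc
  rcases (variance_nonneg Z μ).lt_or_eq with hv | hv
  · simp [hv.ne', prob_le_one]
  · refine le_of_eq_of_le (measure_eq_zero_iff_ae_notMem.2 ?_) zero_le
    filter_upwards [ae_eq_integral_of_variance_eq_zero hZ hv.symm] with ω hω
    simp [hω]

lemma ofReal_one_sub_le_meas_sub_sqrt_le_integral (hZ : MemLp Z 2 μ) {δ : ℝ} (hδ0 : 0 < δ)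
    (hδ1 : δ ≤ 1) :
    ENNReal.ofReal (1 - δ) ≤ μ {ω | Z ω - √((1 - δ) / δ * Var[Z; μ]) ≤ μ[Z]} := by
  set E := {ω | Z ω - √((1 - δ) / δ * Var[Z; μ]) ≤ μ[Z]}
  have hEc : μ Eᶜ ≤ ENNReal.ofReal δ :=
    calc μ Eᶜ = μ {ω | μ[Z] + √((1 - δ) / δ * Var[Z; μ]) < Z ω} := by
          simp only [E, Set.compl_ofPred, not_le, lt_sub_iff_add_lt]
      _ ≤ _ := meas_integral_add_lt_le_variance_div hZ (Real.sqrt_nonneg _)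
      _ ≤ ENNReal.ofReal δ := ENNReal.ofReal_le_ofReal
          (div_add_sqrt_sq_le (variance_nonneg Z μ) hδ0 hδ1)
  rw [ENNReal.ofReal_sub _ hδ0.le, ENNReal.ofReal_one, tsub_le_iff_right]
  calc 1 = μ Set.univ := measure_univ.symm
    _ ≤ μ E + μ Eᶜ := measure_univ_le_add_compl E
    _ ≤ μ E + ENNReal.ofReal δ := by gcongr

end Cantelli

section SampleMean

variable {α ι : Type*} [MeasurableSpace α] [Fintype ι] {q : Measure α} [IsProbabilityMeasure q]
  {f : α → ℝ}

noncomputable def sampleMean (f : α → ℝ) (x : ι → α) : ℝ :=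
  1 / (Fintype.card ι : ℝ) * ∑ i, f (x i)

lemma memLp_sampleMean (hf : MemLp f 2 q) :
    MemLp (sampleMean (ι := ι) f) 2 (Measure.pi fun _ => q) :=
  (memLp_finsetSum _ fun i _ =>
    hf.comp_measurePreserving (measurePreserving_eval _ i)).const_mul _

lemma integral_sampleMean [Nonempty ι] (hf : Integrable f q) :
    ∫ x, sampleMean f x ∂(Measure.pi fun _ : ι => q) = ∫ y, f y ∂q := by
  have heval (i : ι) : ∫ x, f (x i) ∂(Measure.pi fun _ : ι => q) = ∫ y, f y ∂q :=
    integral_comp_eval (μ := fun _ => q) hf.aestronglyMeasurable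
  unfold sampleMean
  rw [integral_const_mul,
    integral_finsetSum _ fun i _ => integrable_comp_eval hf]
  simp [heval]

lemma variance_sampleMean (hf : MemLp f 2 q) :
    Var[sampleMean (ι := ι) f; Measure.pi fun _ => q] = Var[f; q] / Fintype.card ι := by
  have heval (i : ι) : MeasurePreserving (fun x : ι → α => x i) (Measure.pi fun _ => q) q :=
    measurePreserving_eval _ i
  have hindep := iIndepFun_pi (μ := fun _ : ι => q) (X := fun _ => f) fun _ => hf.aemeasurable
  unfold sampleMean
  rw [variance_const_mul, ← Finset.sum_fn,
    IndepFun.variance_sum (X := fun (i : ι) (x : ι → α) => f (x i))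
      (fun i _ => hf.comp_measurePreserving (heval i)) fun i _ j _ hij => hindep.indepFun hij]
  simp only [(heval _).variance_fun_comp hf.aemeasurable, Finset.sum_const, Finset.card_univ,
    nsmul_eq_mul]
  rcases eq_or_ne (Fintype.card ι : ℝ) 0 with h | h
  · simp [h]
  · field_simp

end SampleMean

theorem lower_bound_objective_general
    {α : Type*} [MeasurableSpace α]
    (p q : Measure α) [IsProbabilityMeasure p] [IsProbabilityMeasure q]
    (hpq : p ≪ q)
    (r : α → ℝ) (hr : Measurable r)
    (hwr : Integrable (fun x => ((p.rnDeriv q x).toReal * r x) ^ 2) q)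
    (N : ℕ) (hN : 1 ≤ N)
    (δ : ℝ) (hδ0 : 0 < δ) (hδ1 : δ ≤ 1) :
    (Measure.pi fun _ : Fin N => q)
      {x : Fin N → α |
        (∫ y, r y ∂p) ≥
          (1 / (N : ℝ)) * (∑ i : Fin N, (p.rnDeriv q (x i)).toReal * r (x i)) -
            Real.sqrt (((1 - δ) / δ) *
              (∫ y, ((p.rnDeriv q y).toReal * r y -
                  ∫ z, (p.rnDeriv q z).toReal * r z ∂q) ^ 2 ∂q) / N)} ≥
      ENNReal.ofReal (1 - δ) := by
  have hf : MemLp (fun y => (p.rnDeriv q y).toReal * r y) 2 q :=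
    (memLp_two_iff_integrable_sq (by fun_prop)).2 hwr
  have : Nonempty (Fin N) := ⟨⟨0, hN⟩⟩
  have key := ofReal_one_sub_le_meas_sub_sqrt_le_integral (memLp_sampleMean (ι := Fin N) hf)
    hδ0 hδ1
  rw [integral_sampleMean (hf.integrable one_le_two), variance_sampleMean hf,
    variance_eq_integral hf.aemeasurable, Fintype.card_fin] at key
  rw [← integral_toReal_rnDeriv_mul hpq (f := r)]
  simpa only [sampleMean, Fintype.card_fin, ge_iff_le, mul_div_assoc] using key

/-- Theorem 2: with probability at least `1 − δ` over `N` i.i.d. samples from `q`,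
the true expected reward `J = ∫ r dp` lower-bounds the empirical
marginalized-importance-sampling estimate minus a variance penalty. -/
theorem lower_bound_objective
    {α : Type*} [MeasurableSpace α]
    (p q : Measure α) [IsProbabilityMeasure p] [IsProbabilityMeasure q]
    (hpq : p ≪ q)
    (r : α → ℝ) (hr : Measurable r)
    (R : ℝ) (hR : 0 ≤ R) (hbdd : ∀ᵐ x ∂q, |r x| ≤ R)
    (hwr : Integrable (fun x => ((p.rnDeriv q x).toReal * r x) ^ 2) q)
    (N : ℕ) (hN : 1 ≤ N)
    (δ : ℝ) (hδ0 : 0 < δ) (hδ1 : δ ≤ 1) :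
    (Measure.pi fun _ : Fin N => q)
      {x : Fin N → α |
        (∫ y, r y ∂p) ≥
          (1 / (N : ℝ)) * (∑ i : Fin N, (p.rnDeriv q (x i)).toReal * r (x i)) -
            Real.sqrt (((1 - δ) / δ) *
              (∫ y, ((p.rnDeriv q y).toReal * r y -
                  ∫ z, (p.rnDeriv q z).toReal * r z ∂q) ^ 2 ∂q) / N)} ≥
      ENNReal.ofReal (1 - δ) :=
  lower_bound_objective_general p q hpq r hr hwr N hN δ hδ0 hδ1
end

section
/- Let p and q be probability measures on a measurable space α with p absolutely continuous with respect to q, let ω : α → ℝ be the real-valued Radon–Nikodym derivative of p with respect to q, and let r : α → ℝ be measurable with |r(x)| ≤ R for q-almost every x, where R ≥ 0. Assume ω and ω·r are square-integrable with respect to q. Let J = ∫ r dp, let N ≥ 1, let q^N be the product measure on Fin N → α of N copies of q, and define Ŵ(x) = (1/N) · ∑_{i∈Fin N} ω(x i) · r(x i). Then for every δ with 0 < δ ≤ 1, q^N { x : J ≥ Ŵ(x) − R · sqrt( (1 − δ) · (∫ ω² dq) / (δ · N) ) } ≥ 1 − δ. (The lower bound on the off-policy objective expressed with the exponentiated Rényi-2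 divergence penalty, obtained by combining Theorem 2 with Lemma 3.) -/
/-!
Under `q`, the variable `ω · r` has mean `J = ∫ r dp` and second moment at most `R² ∫ ω² dq`, so
`N · Ŵ` is a sum of `N` i.i.d. variables of mean `N · J` and variance at most `N R² ∫ ω² dq`.
Cantelli's one-sided inequality `P(S - E S > t) ≤ Var S / (Var S + t²)`, applied with
`t = N R sqrt((1 - δ) ∫ ω² dq / (δ N))`, bounds the probability that `J < Ŵ - t / N` by `δ`.
-/

open MeasureTheory ProbabilityTheory

section

variable {Ω : Type*} [MeasurableSpace Ω] {μ : Measure Ω} [IsProbabilityMeasure μ] {X : Ω → ℝ}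

theorem ofReal_one_sub_le_of_measure_compl_le {s : Set Ω} {δ : ℝ} (hδ : 0 ≤ δ)
    (h : μ sᶜ ≤ ENNReal.ofReal δ) :
    ENNReal.ofReal (1 - δ) ≤ μ s := by
  rw [ENNReal.ofReal_sub _ hδ, ENNReal.ofReal_one, tsub_le_iff_right]
  calc 1 = μ Set.univ := measure_univ.symm
    _ ≤ μ s + μ sᶜ := measure_univ_le_add_compl s
    _ ≤ μ s + ENNReal.ofReal δ := by gcongr

theorem meas_ge_le_variance_div_add_sq (hX : MemLp X 2 μ) {t : ℝ} (ht : 0 < t) :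
    μ {ω | t ≤ X ω - μ[X]} ≤ ENNReal.ofReal (Var[X; μ] / (Var[X; μ] + t ^ 2)) := by
  set V := Var[X; μ]
  have hV : 0 ≤ V := variance_nonneg X μ
  -- Markov's inequality for `(X - E X + u)²`, with the shift `u` that optimizes the bound.
  set u := V / t
  have hu : 0 ≤ u := div_nonneg hV ht.le
  set Y := fun ω => X ω - μ[X] + u
  have hY : MemLp Y 2 μ := (hX.sub (memLp_const _)).add (memLp_const _)
  have hY_mean : μ[Y] = u := by
    have hX1 := hX.integrable one_le_two
    have hXc : Integrable (fun ω => X ω - μ[X]) μ := hX1.sub (integrable_const _)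
    simp [Y, integral_add hXc (integrable_const u), integral_sub hX1 (integrable_const _)]
  have hY_sq : μ[Y ^ 2] = V + u ^ 2 := by
    have hVY : Var[Y; μ] = V := by
      have hXc : AEStronglyMeasurable (fun ω => X ω - μ[X]) μ :=
        hX.aestronglyMeasurable.sub aestronglyMeasurable_const
      exact (variance_add_const hXc u).trans (variance_sub_const hX.aestronglyMeasurable _)
    rw [← hVY, variance_eq_sub hY, hY_mean]
    ring
  have hsub : {ω | t ≤ X ω - μ[X]} ⊆ {ω | (t + u) ^ 2 ≤ (Y ^ 2) ω} := fun ω hω => by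
    simp only [Set.mem_ofPred_eq, Pi.pow_apply, Y] at hω ⊢
    exact pow_le_pow_left₀ (by positivity) (by linarith) 2
  have hmarkov := mul_meas_ge_le_integral_of_nonneg (ae_of_all _ fun ω => sq_nonneg (Y ω))
    hY.integrable_sq ((t + u) ^ 2)
  have hcantelli : (V + u ^ 2) / (t + u) ^ 2 = V / (V + t ^ 2) := by
    simp only [u]
    field_simp
    ring
  rw [← hcantelli, ← ofReal_measureReal]
  refine ENNReal.ofReal_le_ofReal ((measureReal_mono hsub).trans ?_)
  rw [le_div_iff₀ (by positivity), mul_comm, ← hY_sq]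
  exact hmarkov

theorem meas_gt_le_variance_div_add_sq (hX : MemLp X 2 μ) {t : ℝ} (ht : 0 ≤ t) :
    μ {ω | t < X ω - μ[X]} ≤ ENNReal.ofReal (Var[X; μ] / (Var[X; μ] + t ^ 2)) := by
  rcases ht.lt_or_eq with ht | rfl
  · refine (measure_mono ?_).trans (meas_ge_le_variance_div_add_sq hX ht)
    exact fun ω (hω : t < X ω - μ[X]) => hω.le
  rcases (variance_nonneg X μ).lt_or_eq with hV | hV
  · simpa [hV.ne'] using prob_le_one
  -- The bound is `0 / 0 = 0` here, which is right since `X` is a.e. constant.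
  have hX_const : ∀ᵐ ω ∂μ, X ω = μ[X] :=
    (evariance_eq_zero_iff hX.aemeasurable).1
      (by rw [← hX.ofReal_variance_eq, ← hV, ENNReal.ofReal_zero])
  have hnull : μ {ω | 0 < X ω - μ[X]} = 0 :=
    measure_mono_null (fun ω (hω : 0 < X ω - μ[X]) => (fun h => by linarith : ¬X ω = μ[X]))
      (ae_iff.1 hX_const)
  rw [hnull]
  exact bot_le

theorem variance_mul_le_of_abs_le_s10 {w r : Ω → ℝ} {R : ℝ}
    (hwr : MemLp (fun y => w y * r y) 2 μ) (hw : Integrable (fun y => w y ^ 2) μ)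
    (hbdd : ∀ᵐ y ∂μ, |r y| ≤ R) :
    Var[fun y => w y * r y; μ] ≤ R ^ 2 * ∫ y, w y ^ 2 ∂μ := by
  refine (variance_le_expectation_sq hwr.aestronglyMeasurable).trans ?_
  rw [← integral_const_mul]
  refine integral_mono_ae hwr.integrable_sq (hw.const_mul _) (hbdd.mono fun y hy => ?_)
  have : r y ^ 2 ≤ R ^ 2 := by simpa using pow_le_pow_left₀ (abs_nonneg (r y)) hy 2
  simp only [Pi.pow_apply, mul_pow]
  nlinarith [sq_nonneg (w y)]

end

theorem measure_pi_sum_gt_le_variance_div_add_sq {ι α : Type*} [Fintype ι] [MeasurableSpace α]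
    {q : Measure α} [IsProbabilityMeasure q] {f : α → ℝ} (hf : MemLp f 2 q) {t : ℝ} (ht : 0 ≤ t) :
    (Measure.pi fun _ : ι => q) {x | t < ∑ i, f (x i) - Fintype.card ι * ∫ y, f y ∂q} ≤
      ENNReal.ofReal (Fintype.card ι * Var[f; q] / (Fintype.card ι * Var[f; q] + t ^ 2)) := by
  set S : (ι → α) → ℝ := ∑ i, fun x => f (x i)
  have hfi : ∀ i, MemLp (fun x : ι → α => f (x i)) 2 (Measure.pi fun _ : ι => q) := fun i =>
    hf.comp_measurePreserving (measurePreserving_eval _ i)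
  have hS : MemLp S 2 (Measure.pi fun _ : ι => q) := memLp_finsetSum' _ fun i _ => hfi i
  have hS_mean : ∫ x, S x ∂(Measure.pi fun _ : ι => q) = Fintype.card ι * ∫ y, f y ∂q := by
    simp only [S, Finset.sum_apply]
    rw [integral_finsetSum _ fun i _ => (hfi i).integrable one_le_two]
    have hcoord (i : ι) : ∫ x, f (x i) ∂(Measure.pi fun _ : ι => q) = ∫ y, f y ∂q :=
      integral_comp_eval (μ := fun _ => q) hf.aestronglyMeasurable
    simp [hcoord]
  have hS_var : Var[S; Measure.pi fun _ : ι => q] = Fintype.card ι * Var[f; q] := by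
    simp [S, variance_sum_pi fun _ => hf]
  have := meas_gt_le_variance_div_add_sq hS ht
  rw [hS_mean, hS_var] at this
  simpa [S] using this

theorem div_add_sq_le_of_mul_one_sub_eq {v B t δ : ℝ} (hv : 0 ≤ v) (hvB : v ≤ B) (hδ0 : 0 ≤ δ)
    (hδ1 : δ ≤ 1) (ht : B * (1 - δ) = δ * t ^ 2) : v / (v + t ^ 2) ≤ δ := by
  rcases (add_nonneg hv (sq_nonneg t)).lt_or_eq with hpos | hzero
  · rw [div_le_iff₀ hpos]
    nlinarith
  · simp [← hzero, hδ0]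

/-- Lower bound on the off-policy objective with the exponentiated Rényi-2
divergence penalty: with probability at least `1 − δ`,
`J ≥ Ŵ − R·sqrt((1−δ)·(∫ ω² dq)/(δ·N))`. -/
theorem lower_bound_objective_renyi
    {α : Type*} [MeasurableSpace α]
    (p q : Measure α) [IsProbabilityMeasure p] [IsProbabilityMeasure q]
    (hpq : p ≪ q)
    (r : α → ℝ) (hr : Measurable r)
    (R : ℝ) (hR : 0 ≤ R) (hbdd : ∀ᵐ x ∂q, |r x| ≤ R)
    (hw : Integrable (fun x => ((p.rnDeriv q x).toReal) ^ 2) q)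
    (hwr : Integrable (fun x => ((p.rnDeriv q x).toReal * r x) ^ 2) q)
    (N : ℕ) (hN : 1 ≤ N)
    (δ : ℝ) (hδ0 : 0 < δ) (hδ1 : δ ≤ 1) :
    (Measure.pi fun _ : Fin N => q)
      {x : Fin N → α |
        (∫ y, r y ∂p) ≥
          (1 / (N : ℝ)) * (∑ i : Fin N, (p.rnDeriv q (x i)).toReal * r (x i)) -
            R * Real.sqrt ((1 - δ) *
              (∫ y, ((p.rnDeriv q y).toReal) ^ 2 ∂q) / (δ * N))} ≥
      ENNReal.ofReal (1 - δ) := by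
  set f : α → ℝ := fun y => (p.rnDeriv q y).toReal * r y
  set M := ∫ y, ((p.rnDeriv q y).toReal) ^ 2 ∂q
  set ε := R * Real.sqrt ((1 - δ) * M / (δ * N))
  have hN0 : (0 : ℝ) < N := by exact_mod_cast hN
  have hM : 0 ≤ M := integral_nonneg fun y => sq_nonneg _
  have hf : MemLp f 2 q := (memLp_two_iff_integrable_sq
    ((Measure.measurable_rnDeriv p q).ennreal_toReal.mul hr).aestronglyMeasurable).2 hwr
  have hJ : ∫ y, r y ∂p = ∫ y, f y ∂q := (integral_toReal_rnDeriv_mul hpq).symm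
  have hvar : Var[f; q] ≤ R ^ 2 * M := variance_mul_le_of_abs_le_s10 hf hw hbdd
  have hbad : {x : Fin N → α | ∫ y, r y ∂p ≥ 1 / (N : ℝ) * ∑ i, f (x i) - ε}ᶜ ⊆
      {x | N * ε < ∑ i, f (x i) - Fintype.card (Fin N) * ∫ y, f y ∂q} := fun x hx => by
    simp only [Set.mem_compl_iff, Set.mem_ofPred_eq, ge_iff_le, not_le, Fintype.card_fin] at hx ⊢
    rw [hJ, lt_sub_iff_add_lt, one_div, ← div_eq_inv_mul, lt_div_iff₀ hN0] at hx
    linarith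
  have hε : (R ^ 2 * M * N) * (1 - δ) = δ * (N * ε) ^ 2 := by
    have ha : 0 ≤ (1 - δ) * M / (δ * N) :=
      div_nonneg (mul_nonneg (sub_nonneg.2 hδ1) hM) (by positivity)
    rw [mul_pow, mul_pow, Real.sq_sqrt ha]
    field_simp
  refine ofReal_one_sub_le_of_measure_compl_le hδ0.le ((measure_mono hbad).trans ?_)
  have ht : 0 ≤ N * ε := mul_nonneg hN0.le (mul_nonneg hR (Real.sqrt_nonneg _))
  refine (measure_pi_sum_gt_le_variance_div_add_sq hf ht).trans (ENNReal.ofReal_le_ofReal ?_)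
  rw [Fintype.card_fin]
  exact div_add_sq_le_of_mul_one_sub_eq (mul_nonneg hN0.le (variance_nonneg f q))
    (by rw [mul_comm]; gcongr) hδ0.le hδ1 hε
end

section
/- Let p and q be probability measures on a measurable space α with p absolutely continuous with respect to q. Then the Kullback–Leibler divergence satisfies the Donsker–Varadhan variational formula: for every bounded measurable function x : α → ℝ, KL(p ‖ q) ≥ ∫ x dp − log ∫ exp(x) dq, and KL(p ‖ q) equals the supremum of ∫ x dp − log ∫ exp(x) dq over all bounded measurable x : α → ℝ. (Donsker–Varadhan representation of the KL divergence, used in the appendix to obtain a batch-only estimator of the distribution ratio.) -/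
open MeasureTheory
open scoped ENNReal Classical

/-- The Kullback–Leibler divergence `∫ log(dp/dq) dp`, valued in `[0, ∞]`:
it is `ENNReal.ofReal` of the integral when the log-likelihood ratio is
integrable with respect to `p`, and `∞` otherwise. -/

noncomputable def klDiv {α : Type*} [MeasurableSpace α] (p q : Measure α) : ℝ≥0∞ :=
  if Integrable (fun x => Real.log ((p.rnDeriv q x).toReal)) p then
    ENNReal.ofReal (∫ x, Real.log ((p.rnDeriv q x).toReal) ∂p)
  else ∞

/-!
For the inequality, tilt `q` by `x`: with `dq_x = e^x dq / ∫ e^x dq` one has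
`KL(p ‖ q_x) = KL(p ‖ q) - ∫ x dp + log ∫ e^x dq`, so it is Gibbs' inequality `0 ≤ KL(p ‖ q_x)`.

For the supremum, write `f = dp/dq`, so that `KL(p ‖ q) = ∫ (f log f + 1 - f) dq`, and note that
`log y ≤ y - 1` bounds the objective at `x` from below by `∫ (f x + 1 - e^x) dq`. Take
`x_n = log c_n(f)`, where `c_n` clamps to `[e^{-n}, e^n]`. Since `c_n(f)` lies between `1` and `f`,
the integrand `f log c_n(f) + 1 - c_n(f)` is nonnegative, and it tends to `f log f + 1 - f`, so
Fatou's lemma gives `KL(p ‖ q) ≤ sup_n (∫ x_n dp - log ∫ e^{x_n} dq)`.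
-/

open Real Filter Topology

noncomputable def expClamp (n : ℕ) (t : ℝ) : ℝ := max (exp (-n)) (min (exp n) t)

lemma expClamp_pos (n : ℕ) (t : ℝ) : 0 < expClamp n t :=
  lt_max_of_lt_left (exp_pos _)

lemma abs_log_expClamp_le (n : ℕ) (t : ℝ) : |log (expClamp n t)| ≤ n := by
  have hlo : exp (-n) ≤ expClamp n t := le_max_left _ _
  have hhi : expClamp n t ≤ exp n :=
    max_le (exp_le_exp.2 (by linarith [n.cast_nonneg (α := ℝ)])) (min_le_left _ _)
  rw [abs_le]
  constructor
  · simpa using log_le_log (exp_pos _) hlo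
  · simpa using log_le_log (expClamp_pos n t) hhi

lemma mul_log_expClamp_add_one_sub_expClamp_nonneg (n : ℕ) (t : ℝ) :
    0 ≤ t * log (expClamp n t) + 1 - expClamp n t := by
  set c := expClamp n t
  have hc : 0 < c := expClamp_pos n t
  have hlo : exp (-n) ≤ 1 := exp_le_one_iff.2 (by simp)
  have hhi : 1 ≤ exp n := one_le_exp (by positivity)
  -- `c` lies between `1` and `t`
  have hbetween : 0 ≤ (t - c) * log c := by
    rcases le_total t 1 with h | h
    · have hc' : c = max (exp (-n)) t := by simp only [c, expClamp, min_eq_right (h.trans hhi)]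
      exact mul_nonneg_of_nonpos_of_nonpos (by rw [hc']; linarith [le_max_right (exp (-n)) t])
        (log_nonpos hc.le (by rw [hc']; exact max_le hlo h))
    · have hc' : c = min (exp n) t := max_eq_right (hlo.trans (le_min hhi h))
      exact mul_nonneg (by rw [hc']; linarith [min_le_right (exp n) t])
        (log_nonneg (by rw [hc']; exact le_min hhi h))
  nlinarith [self_sub_one_le_mul_log hc.le]

lemma tendsto_expClamp {t : ℝ} (ht : 0 ≤ t) :
    Tendsto (fun n : ℕ => expClamp n t) atTop (𝓝 t) := by
  have hexp : Tendsto (fun n : ℕ => exp (n : ℝ)) atTop atTop :=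
    tendsto_exp_atTop.comp tendsto_natCast_atTop_atTop
  have hexp_neg : Tendsto (fun n : ℕ => exp (-(n : ℝ))) atTop (𝓝 0) :=
    tendsto_exp_neg_atTop_nhds_zero.comp tendsto_natCast_atTop_atTop
  have hmin : ∀ᶠ n : ℕ in atTop, min (exp (n : ℝ)) t = t := by
    filter_upwards [hexp.eventually_ge_atTop t] with n hn using min_eq_right hn
  simpa [expClamp, max_eq_right ht] using
    hexp_neg.max (tendsto_const_nhds.congr' (hmin.mono fun _ h => h.symm))

lemma tendsto_mul_log_expClamp_add_one_sub_expClamp {t : ℝ} (ht : 0 ≤ t) :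
    Tendsto (fun n : ℕ => t * log (expClamp n t) + 1 - expClamp n t) atTop
      (𝓝 (InformationTheory.klFun t)) := by
  have hmul_log : Tendsto (fun n : ℕ => t * log (expClamp n t)) atTop (𝓝 (t * log t)) := by
    rcases ht.eq_or_lt with rfl | ht
    · simp
    · exact ((continuousAt_log ht.ne').tendsto.comp (tendsto_expClamp ht.le)).const_mul t
  exact (hmul_log.add_const 1).sub (tendsto_expClamp ht)

section DonskerVaradhan

variable {α : Type*} [MeasurableSpace α]

lemma Measurable.integrable_of_abs_le {μ : Measure α} [IsFiniteMeasure μ] {x : α → ℝ}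
    (hx : Measurable x) {C : ℝ} (hC : ∀ a, |x a| ≤ C) : Integrable x μ :=
  .of_bound hx.aestronglyMeasurable C (ae_of_all _ hC)

lemma Measurable.integrable_exp_of_abs_le {μ : Measure α} [IsFiniteMeasure μ] {x : α → ℝ}
    (hx : Measurable x) {C : ℝ} (hC : ∀ a, |x a| ≤ C) : Integrable (fun a => exp (x a)) μ :=
  hx.exp.integrable_of_abs_le fun a => by
    rw [abs_exp]
    exact exp_le_exp.2 (abs_le.1 (hC a)).2

variable {p q : Measure α}

noncomputable def llrClamp (p q : Measure α) (n : ℕ) (a : α) : ℝ :=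
  log (expClamp n (p.rnDeriv q a).toReal)

@[fun_prop]
lemma measurable_llrClamp (n : ℕ) : Measurable (llrClamp p q n) :=
  (measurable_const.max (measurable_const.min (p.measurable_rnDeriv q).ennreal_toReal)).log

lemma abs_llrClamp_le (n : ℕ) (a : α) : |llrClamp p q n a| ≤ n :=
  abs_log_expClamp_le n _

lemma exp_llrClamp (n : ℕ) (a : α) : exp (llrClamp p q n a) = expClamp n (p.rnDeriv q a).toReal :=
  exp_log (expClamp_pos n _)

variable [IsProbabilityMeasure p] [IsProbabilityMeasure q] {x : α → ℝ}

lemma klDiv_eq_klDiv_of_ac (hpq : p ≪ q) : klDiv p q = InformationTheory.klDiv p q := by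
  by_cases hllr : Integrable (fun a => log (p.rnDeriv q a).toReal) p
  · rw [InformationTheory.klDiv_of_ac_of_integrable hpq hllr, klDiv, if_pos hllr]
    simp [llr]
  · rw [InformationTheory.klDiv_of_not_integrable hllr, klDiv, if_neg hllr]

lemma integral_sub_log_integral_exp_le_integral_llr (hpq : p ≪ q) (hllr : Integrable (llr p q) p)
    (hx : Integrable x p) (hexp : Integrable (fun a => exp (x a)) q) :
    ∫ a, x a ∂p - log (∫ a, exp (x a) ∂q) ≤ ∫ a, llr p q a ∂p := by
  have := isProbabilityMeasure_tilted hexp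
  have hgibbs := InformationTheory.integral_llr_add_sub_measure_univ_nonneg
    (hpq.trans (absolutelyContinuous_tilted hexp)) (integrable_llr_tilted_right hpq hx hllr hexp)
  rw [integral_llr_tilted_right hpq hx hexp hllr] at hgibbs
  simp only [probReal_univ] at hgibbs
  linarith

lemma ofReal_integral_sub_log_integral_exp_le_klDiv (hx : Integrable x p)
    (hexp : Integrable (fun a => exp (x a)) q) :
    ENNReal.ofReal (∫ a, x a ∂p - log (∫ a, exp (x a) ∂q)) ≤ InformationTheory.klDiv p q := by
  by_cases h : p ≪ q ∧ Integrable (llr p q) p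
  · rw [InformationTheory.klDiv_of_ac_of_integrable h.1 h.2]
    simpa using ENNReal.ofReal_le_ofReal
      (integral_sub_log_integral_exp_le_integral_llr h.1 h.2 hx hexp)
  · rw [InformationTheory.klDiv_eq_top_iff.2 (fun hpq hllr => h ⟨hpq, hllr⟩)]
    exact le_top

lemma integrable_rnDeriv_mul_add_one_sub_exp (hpq : p ≪ q) (hx : Integrable x p)
    (hexp : Integrable (fun a => exp (x a)) q) :
    Integrable (fun a => (p.rnDeriv q a).toReal * x a + 1 - exp (x a)) q :=
  (((integrable_toReal_rnDeriv_mul_iff hpq).2 hx).add (integrable_const 1)).sub hexp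

lemma integral_rnDeriv_mul_add_one_sub_exp_le (hpq : p ≪ q) (hx : Integrable x p)
    (hexp : Integrable (fun a => exp (x a)) q) :
    ∫ a, ((p.rnDeriv q a).toReal * x a + 1 - exp (x a)) ∂q
      ≤ ∫ a, x a ∂p - log (∫ a, exp (x a) ∂q) := by
  have hfx := (integrable_toReal_rnDeriv_mul_iff hpq).2 hx
  have hfx1 : Integrable (fun a => (p.rnDeriv q a).toReal * x a + 1) q :=
    hfx.add (integrable_const 1)
  rw [integral_sub hfx1 hexp, integral_add hfx (integrable_const 1),
    integral_toReal_rnDeriv_mul hpq]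
  simp only [integral_const, probReal_univ, smul_eq_mul, mul_one]
  linarith [log_le_sub_one_of_pos (integral_exp_pos hexp)]

lemma klDiv_le_iSup_llrClamp (hpq : p ≪ q) :
    InformationTheory.klDiv p q ≤ ⨆ n : ℕ,
      ENNReal.ofReal (∫ a, llrClamp p q n a ∂p - log (∫ a, exp (llrClamp p q n a) ∂q)) := by
  set f : α → ℝ := fun a => (p.rnDeriv q a).toReal
  set ψ : ℕ → α → ℝ := fun n a => f a * llrClamp p q n a + 1 - exp (llrClamp p q n a)
  have hψ (n : ℕ) (a : α) : ψ n a = f a * log (expClamp n (f a)) + 1 - expClamp n (f a) := by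
    simp only [ψ, exp_llrClamp]; rfl
  rw [InformationTheory.klDiv_eq_lintegral_klFun_of_ac hpq]
  calc ∫⁻ a, ENNReal.ofReal (InformationTheory.klFun (f a)) ∂q
      = ∫⁻ a, liminf (fun n => ENNReal.ofReal (ψ n a)) atTop ∂q := by
        refine lintegral_congr fun a =>
          ((ENNReal.continuous_ofReal.tendsto _).comp ?_).liminf_eq.symm
        simpa only [hψ] using tendsto_mul_log_expClamp_add_one_sub_expClamp ENNReal.toReal_nonneg
    _ ≤ liminf (fun n => ∫⁻ a, ENNReal.ofReal (ψ n a) ∂q) atTop :=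
        lintegral_liminf_le fun n => by simp only [ψ, f]; fun_prop
    _ ≤ ⨆ n, ∫⁻ a, ENNReal.ofReal (ψ n a) ∂q :=
        liminf_le_of_frequently_le' (Frequently.of_forall fun n => le_iSup (α := ℝ≥0∞) _ n)
    _ ≤ _ := by
        refine iSup_mono fun n => ?_
        have hint : Integrable (llrClamp p q n) p :=
          (measurable_llrClamp n).integrable_of_abs_le (abs_llrClamp_le n)
        have hexp : Integrable (fun a => exp (llrClamp p q n a)) q :=
          (measurable_llrClamp n).integrable_exp_of_abs_le (abs_llrClamp_le n)
        rw [← ofReal_integral_eq_lintegral_ofReal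
          (integrable_rnDeriv_mul_add_one_sub_exp hpq hint hexp)
          (ae_of_all _ fun a =>
            (hψ n a).ge.trans' (mul_log_expClamp_add_one_sub_expClamp_nonneg n _))]
        exact ENNReal.ofReal_le_ofReal (integral_rnDeriv_mul_add_one_sub_exp_le hpq hint hexp)

end DonskerVaradhan

/-- Donsker–Varadhan variational representation of the KL divergence: for all
bounded measurable `x`, `KL(p‖q) ≥ ∫ x dp − log ∫ exp(x) dq`, and `KL(p‖q)`
equals the supremum of these quantities over bounded measurable `x`. -/
theorem donsker_varadhan
    {α : Type*} [MeasurableSpace α]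
    (p q : Measure α) [IsProbabilityMeasure p] [IsProbabilityMeasure q]
    (hpq : p ≪ q) :
    (∀ x : α → ℝ, Measurable x → (∃ C : ℝ, ∀ a, |x a| ≤ C) →
        ENNReal.ofReal ((∫ a, x a ∂p) - Real.log (∫ a, Real.exp (x a) ∂q)) ≤
          klDiv p q) ∧
      klDiv p q =
        ⨆ (x : α → ℝ) (_ : Measurable x) (_ : ∃ C : ℝ, ∀ a, |x a| ≤ C),
          ENNReal.ofReal ((∫ a, x a ∂p) - Real.log (∫ a, Real.exp (x a) ∂q)) := by
  rw [klDiv_eq_klDiv_of_ac hpq]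
  have hle (x : α → ℝ) (hx : Measurable x) (hbdd : ∃ C : ℝ, ∀ a, |x a| ≤ C) :
      ENNReal.ofReal ((∫ a, x a ∂p) - log (∫ a, exp (x a) ∂q)) ≤ InformationTheory.klDiv p q := by
    obtain ⟨C, hC⟩ := hbdd
    exact ofReal_integral_sub_log_integral_exp_le_klDiv (hx.integrable_of_abs_le hC)
      (hx.integrable_exp_of_abs_le hC)
  refine ⟨hle, le_antisymm ((klDiv_le_iSup_llrClamp hpq).trans (iSup_le fun n => ?_))
    (iSup_le fun x => iSup₂_le (hle x))⟩
  exact le_iSup_of_le (llrClamp p q n)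
    (le_iSup_of_le (measurable_llrClamp n) (le_iSup_of_le ⟨n, abs_llrClamp_le n⟩ le_rfl))
end
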